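/- For every real δ > 1, every real ε > 0, and every positive integer k, the Laplace slender-body PDE eigenvalue λ = 2π²εk·K₁(πεk)/K₀(πεk) and the δ-regularized Laplace slender-body approximation eigenvalue λ^δ = 2π/(log δ + K₀(δπεk)) satisfy |λ − λ^δ| ≤ 2π·(1/2 + 1/log δ + πεk). -/

import Mathlib

open Real

/-- Modified Bessel function of the second kind of order `j`:
`K_j(z) = ∫₀^∞ exp (−z cosh t) * cosh (j t) dt`. -/
noncomputable def besselK (j : ℕ) (z : ℝ) : ℝ :=
  ∫ t in Set.Ioi (0 : ℝ), Real.exp (-z * Real.cosh t) * Real.cosh ((j : ℝ) * t)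

/-! All quantities involved are nonnegative, so `|λ - λ^δ| ≤ max λ λ^δ`. Since `K₀ ≥ 0`,
`λ^δ ≤ 2π / log δ`. For `λ = 2π z K₁(z) / K₀(z)` with `z = πεk` the point is the bound
`z K₁(z) ≤ (z + 1/2) K₀(z)`: as `z sinh t · sinh t / (1 + cosh t) = z (cosh t - 1)` and
`sinh t / (1 + cosh t) = tanh (t / 2)` has derivative `1 / (1 + cosh t) ≤ 1 / 2`, integrating
by parts gives `z (K₁(z) - K₀(z)) = ∫₀^∞ exp (-z cosh t) / (1 + cosh t) dt ≤ K₀(z) / 2`. -/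

open MeasureTheory Set Filter Topology

theorem Real.self_le_cosh (t : ℝ) : t ≤ cosh t :=
  calc t ≤ |t| := le_abs_self t
    _ ≤ sinh |t| := self_le_sinh_iff.2 (abs_nonneg t)
    _ ≤ cosh |t| := (sinh_lt_cosh _).le
    _ = cosh t := cosh_abs t

theorem Real.mul_exp_neg_mul_le {z : ℝ} (hz : 0 < z) (x : ℝ) : x * exp (-z * x) ≤ 1 / z := by
  have h := add_one_le_exp (z * x)
  rw [neg_mul, exp_neg, ← div_eq_mul_inv, div_le_div_iff₀ (exp_pos _) hz]
  linarith

theorem Real.exp_neg_mul_cosh_le {z : ℝ} (hz : 0 ≤ z) (t : ℝ) :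
    exp (-z * cosh t) ≤ exp (-z * t) :=
  exp_le_exp.2 (by nlinarith [self_le_cosh t])

theorem integrableOn_exp_neg_mul_cosh {z : ℝ} (hz : 0 < z) :
    IntegrableOn (fun t => exp (-z * cosh t)) (Ioi 0) := by
  refine (exp_neg_integrableOn_Ioi 0 hz).mono' (by fun_prop) (Eventually.of_forall fun t => ?_)
  rw [norm_of_nonneg (exp_pos _).le]
  exact exp_neg_mul_cosh_le hz.le t

theorem integrableOn_exp_neg_mul_cosh_mul_cosh {z : ℝ} (hz : 0 < z) :
    IntegrableOn (fun t => exp (-z * cosh t) * cosh t) (Ioi 0) := by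
  have hz2 : 0 < z / 2 := half_pos hz
  refine ((integrableOn_exp_neg_mul_cosh hz2).const_mul (2 / z)).mono' (by fun_prop)
    (Eventually.of_forall fun t => ?_)
  have hsplit : exp (-z * cosh t) * cosh t
      = (cosh t * exp (-(z / 2) * cosh t)) * exp (-(z / 2) * cosh t) := by
    rw [mul_assoc, ← exp_add]; ring_nf
  rw [norm_of_nonneg (by positivity), hsplit]
  gcongr
  simpa using mul_exp_neg_mul_le hz2 (cosh t)

theorem besselK_zero_eq (z : ℝ) : besselK 0 z = ∫ t in Ioi 0, exp (-z * cosh t) := by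
  simp [besselK]

theorem besselK_one_eq (z : ℝ) : besselK 1 z = ∫ t in Ioi 0, exp (-z * cosh t) * cosh t := by
  simp [besselK]

theorem besselK_nonneg (j : ℕ) (z : ℝ) : 0 ≤ besselK j z :=
  setIntegral_nonneg measurableSet_Ioi fun _ _ => mul_nonneg (exp_pos _).le (cosh_pos _).le

theorem besselK_zero_pos {z : ℝ} (hz : 0 < z) : 0 < besselK 0 z := by
  rw [besselK_zero_eq]
  have : NeZero (volume (Ioi (0 : ℝ))) := ⟨by simp⟩
  exact integral_exp_pos (integrableOn_exp_neg_mul_cosh hz)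

theorem Real.hasDerivAt_sinh_div_one_add_cosh (t : ℝ) :
    HasDerivAt (fun t => sinh t / (1 + cosh t)) (1 / (1 + cosh t)) t := by
  have hpos : 0 < 1 + cosh t := by linarith [cosh_pos t]
  refine ((hasDerivAt_sinh t).div ((hasDerivAt_cosh t).const_add 1) hpos.ne').congr_deriv ?_
  field_simp
  linear_combination cosh_sq t

theorem hasDerivAt_exp_neg_mul_cosh_mul_sinh_div_one_add_cosh (z t : ℝ) :
    HasDerivAt (fun t => -(exp (-z * cosh t) * (sinh t / (1 + cosh t))))
      (exp (-z * cosh t) * (z * (cosh t - 1) - 1 / (1 + cosh t))) t := by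
  have hpos : 0 < 1 + cosh t := by linarith [cosh_pos t]
  refine (((hasDerivAt_cosh t).const_mul (-z)).exp.mul
    (hasDerivAt_sinh_div_one_add_cosh t)).neg.congr_deriv ?_
  field_simp
  linear_combination z * sinh_sq t

theorem tendsto_exp_neg_mul_cosh_mul_sinh_div_one_add_cosh {z : ℝ} (hz : 0 < z) :
    Tendsto (fun t => -(exp (-z * cosh t) * (sinh t / (1 + cosh t)))) atTop (𝓝 0) := by
  have hexp : Tendsto (fun t => exp (-z * t)) atTop (𝓝 0) := by
    have := tendsto_exp_neg_atTop_nhds_zero.comp (tendsto_id.const_mul_atTop hz)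
    simpa only [Function.comp_def, id, neg_mul] using this
  refine squeeze_zero_norm (fun t => ?_) hexp
  have hpos : 0 < 1 + cosh t := by linarith [cosh_pos t]
  have hw : |sinh t / (1 + cosh t)| ≤ 1 := by
    rw [abs_div, abs_of_pos hpos, div_le_one hpos, abs_sinh]
    linarith [sinh_lt_cosh |t|, cosh_abs t]
  rw [norm_neg, norm_mul, norm_of_nonneg (exp_pos _).le, Real.norm_eq_abs]
  calc exp (-z * cosh t) * |sinh t / (1 + cosh t)| ≤ exp (-z * cosh t) * 1 := by gcongr
    _ ≤ exp (-z * t) := by simpa using exp_neg_mul_cosh_le hz.le t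

theorem mul_besselK_one_sub_besselK_zero {z : ℝ} (hz : 0 < z) :
    z * (besselK 1 z - besselK 0 z) = ∫ t in Ioi 0, exp (-z * cosh t) / (1 + cosh t) := by
  have hI0 := integrableOn_exp_neg_mul_cosh hz
  have hI1 := integrableOn_exp_neg_mul_cosh_mul_cosh hz
  have hIw : IntegrableOn (fun t => exp (-z * cosh t) / (1 + cosh t)) (Ioi 0) := by
    have hcont : Continuous fun t => exp (-z * cosh t) / (1 + cosh t) :=
      (by fun_prop : Continuous _).div (by fun_prop) fun t => by linarith [cosh_pos t]
    refine hI0.mono' hcont.aestronglyMeasurable (Eventually.of_forall fun t => ?_)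
    rw [norm_of_nonneg (by positivity)]
    exact div_le_self (exp_pos _).le (by linarith [one_le_cosh t])
  have hderiv : ∀ t, exp (-z * cosh t) * (z * (cosh t - 1) - 1 / (1 + cosh t))
      = z * (exp (-z * cosh t) * cosh t) - z * exp (-z * cosh t)
        - exp (-z * cosh t) / (1 + cosh t) := fun t => by ring
  have hftc := integral_Ioi_of_hasDerivAt_of_tendsto'
    (fun t _ => hasDerivAt_exp_neg_mul_cosh_mul_sinh_div_one_add_cosh z t)
    (by simp_rw [hderiv]; exact ((hI1.const_mul z).sub (hI0.const_mul z)).sub hIw)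
    (tendsto_exp_neg_mul_cosh_mul_sinh_div_one_add_cosh hz)
  have hsplit : ∫ t in Ioi 0, (z * (exp (-z * cosh t) * cosh t) - z * exp (-z * cosh t)
      - exp (-z * cosh t) / (1 + cosh t))
      = z * besselK 1 z - z * besselK 0 z - ∫ t in Ioi 0, exp (-z * cosh t) / (1 + cosh t) := by
    rw [integral_sub (f := fun t => z * (exp (-z * cosh t) * cosh t) - z * exp (-z * cosh t))
        ((hI1.const_mul z).sub (hI0.const_mul z)) hIw,
      integral_sub (hI1.const_mul z) (hI0.const_mul z), integral_const_mul, integral_const_mul,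
      besselK_one_eq, besselK_zero_eq]
  rw [sinh_zero, zero_div, mul_zero, neg_zero, sub_zero] at hftc
  simp_rw [hderiv] at hftc
  linarith

theorem mul_besselK_one_le {z : ℝ} (hz : 0 < z) :
    z * besselK 1 z ≤ (z + 1 / 2) * besselK 0 z := by
  have hbound : ∫ t in Ioi 0, exp (-z * cosh t) / (1 + cosh t)
      ≤ ∫ t in Ioi 0, exp (-z * cosh t) / 2 := by
    refine integral_mono_of_nonneg (Eventually.of_forall fun t => by positivity)
      ((integrableOn_exp_neg_mul_cosh hz).div_const 2) (Eventually.of_forall fun t => ?_)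
    exact div_le_div_of_nonneg_left (exp_pos _).le two_pos (by linarith [one_le_cosh t])
  rw [integral_div, ← besselK_zero_eq, ← mul_besselK_one_sub_besselK_zero hz] at hbound
  linarith

theorem mul_besselK_one_div_besselK_zero_le {z : ℝ} (hz : 0 < z) :
    z * (besselK 1 z / besselK 0 z) ≤ z + 1 / 2 := by
  rw [← mul_div_assoc, div_le_iff₀ (besselK_zero_pos hz)]
  exact mul_besselK_one_le hz

theorem delta_reg_laplace_eigenvalue_difference (δ : ℝ) (hδ : 1 < δ)
    (ε : ℝ) (hε : 0 < ε) (k : ℕ) (hk : 1 ≤ k) :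
    |2 * π ^ 2 * ε * (k : ℝ) *
          (besselK 1 (π * ε * (k : ℝ)) / besselK 0 (π * ε * (k : ℝ))) -
        2 * π / (Real.log δ + besselK 0 (δ * π * ε * (k : ℝ)))| ≤
      2 * π * (1 / 2 + 1 / Real.log δ + π * ε * (k : ℝ)) := by
  have hlog : 0 < log δ := log_pos hδ
  have hk' : (0 : ℝ) < k := by exact_mod_cast hk
  set z := π * ε * k with hz_def
  have hz : 0 < z := by positivity
  have hK1 := besselK_nonneg 1 z
  have hK0 := besselK_nonneg 0 z
  have hK0δ := besselK_nonneg 0 (δ * π * ε * k)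
  have hpde : 2 * π ^ 2 * ε * k * (besselK 1 z / besselK 0 z)
      = 2 * π * (z * (besselK 1 z / besselK 0 z)) := by
    rw [hz_def]; ring
  have hpde_le :
      2 * π * (z * (besselK 1 z / besselK 0 z)) ≤ 2 * π * (1 / 2 + 1 / log δ + z) := by
    have := mul_besselK_one_div_besselK_zero_le hz
    have : 0 ≤ 1 / log δ := by positivity
    gcongr
    linarith
  have hreg_le :
      2 * π / (log δ + besselK 0 (δ * π * ε * k)) ≤ 2 * π * (1 / 2 + 1 / log δ + z) :=
    calc 2 * π / (log δ + besselK 0 (δ * π * ε * k))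
        ≤ 2 * π * (1 / log δ) := by
          rw [mul_one_div]; exact div_le_div_of_nonneg_left (by positivity) hlog (by linarith)
      _ ≤ 2 * π * (1 / 2 + 1 / log δ + z) := by gcongr; linarith
  rw [hpde]
  exact abs_sub_le_of_nonneg_of_le (by positivity) hpde_le (by positivity) hreg_le
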